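/- An agent that wins only by exaggerating incurs a strictly negative utility: suppose all agents j ≠ i bid truthfully (b_j = v_j), and suppose the true value v_i is strictly less than the K-th largest value among {v_j : j ≠ i}. If agent i submits a bid b_i such that i belongs to some welfare-maximizing K-subset S for the reported profile, then agent i's utility v_i − max_{j∉S} b_j is strictly negative. -/

import Mathlib

/-!
Since `i` occupies one of the `K` winning slots, at most `K - 1` of the `K` agents whose
value exceeds `v i` can win, so one of them, `j`, loses. Its truthful bid `v j > v i` is a
losing bid, hence the price `i` pays is at least `v j > v i`.
-/

open Finset

/-- The highest losing bid: the maximum of the bids of agents outside the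
selected set `S` (as a supremum of the image set). -/
noncomputable def losingBid {N : ℕ} (b : Fin N → ℝ) (S : Finset (Fin N)) : ℝ :=
  sSup (b '' {j | j ∉ S})

/-- `S` is a welfare-maximizing `K`-subset for the reported bid profile `b`. -/
def IsWelfareMax {N : ℕ} (b : Fin N → ℝ) (K : ℕ) (S : Finset (Fin N)) : Prop :=
  S.card = K ∧ ∀ T : Finset (Fin N), T.card = K → ∑ j ∈ T, b j ≤ ∑ j ∈ S, b j

theorem le_losingBid {N : ℕ} (b : Fin N → ℝ) {S : Finset (Fin N)} {j : Fin N} (hj : j ∉ S) :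
    b j ≤ losingBid b S :=
  le_csSup (Set.toFinite _).bddAbove ⟨j, hj, rfl⟩

theorem Finset.exists_mem_notMem_of_card_le_of_mem {α : Type*} [DecidableEq α]
    {S A : Finset α} {i : α} (hiS : i ∈ S) (hiA : i ∉ A) (hcard : S.card ≤ A.card) :
    ∃ j ∈ A, j ∉ S := by
  obtain ⟨j, hjA, hjS⟩ :=
    exists_mem_notMem_of_card_lt_card ((card_erase_lt_of_mem hiS).trans_le hcard)
  refine ⟨j, hjA, fun hj ↦ hjS (mem_erase.mpr ⟨?_, hj⟩)⟩
  rintro rfl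
  exact hiA hjA

theorem winning_by_exaggeration_negative_utility_general {N K : ℕ}
    (i : Fin N) (v : Fin N → ℝ)
    (hKth : K ≤ (Finset.univ.filter (fun j : Fin N => j ≠ i ∧ v i < v j)).card)
    (bi : ℝ)
    (S : Finset (Fin N)) (hS : IsWelfareMax (Function.update v i bi) K S)
    (hiS : i ∈ S) :
    v i - losingBid (Function.update v i bi) S < 0 := by
  obtain ⟨j, hjA, hjS⟩ := exists_mem_notMem_of_card_le_of_mem hiS
    (by simp) (hS.1.trans_le hKth)
  obtain ⟨hji, hvij⟩ := (mem_filter.mp hjA).2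
  have hprice : v j ≤ losingBid (Function.update v i bi) S := by
    simpa [Function.update_of_ne hji] using le_losingBid (Function.update v i bi) hjS
  linarith

/-- An agent that wins only by exaggerating incurs a strictly negative utility:
if all other agents bid truthfully and `v i` is strictly below the `K`-th
largest value among the other agents (i.e. at least `K` other agents have a
strictly larger true value), then whenever agent `i` is selected by bidding
`bi`, its utility `v i - max_{j∉S} b j` is strictly negative. -/
theorem winning_by_exaggeration_negative_utility {N K : ℕ} (hK : 0 < K) (hKN : K < N)
    (i : Fin N) (v : Fin N → ℝ) (hv : ∀ j, 0 ≤ v j)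
    (hKth : K ≤ (Finset.univ.filter (fun j : Fin N => j ≠ i ∧ v i < v j)).card)
    (bi : ℝ) (hbi : 0 ≤ bi)
    (S : Finset (Fin N)) (hS : IsWelfareMax (Function.update v i bi) K S)
    (hiS : i ∈ S) :
    v i - losingBid (Function.update v i bi) S < 0 :=
  winning_by_exaggeration_negative_utility_general i v hKth bi S hS hiS
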